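/- arXiv:1905.08299 — 2 statements merged into one kernel-verified Lean document; each statement's English description precedes it below -/
import Mathlib

section
/- For any d ≥ 2 and s ∈ [d−2, d−1), and any A ∈ GL_d(ℝ), one has φ^{d−s}(|det A|^{1/(d−s)} (A^{-1})ᵀ) = φ^s(A). -/
open Polynomial


open Matrix

/-- The singular values of a square real matrix `M`, listed in decreasing order. -/
noncomputable def svals {d : ℕ} (M : Matrix (Fin d) (Fin d) ℝ) : Fin d → ℝ :=
  fun i =>
    (fun j => Real.sqrt ((show (Mᵀ * M).IsHermitian by
        simpa [Matrix.conjTranspose_eq_transpose_of_trivial] using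
          Matrix.isHermitian_conjTranspose_mul_self M).eigenvalues j))
      (Tuple.sort (fun j => Real.sqrt
        ((show (Mᵀ * M).IsHermitian by
        simpa [Matrix.conjTranspose_eq_transpose_of_trivial] using
          Matrix.isHermitian_conjTranspose_mul_self M).eigenvalues j)) i.rev)

/-- `σ_{i+1}(M)` with the convention that out-of-range indices give `0`. -/
noncomputable def svalN {d : ℕ} (M : Matrix (Fin d) (Fin d) ℝ) (i : ℕ) : ℝ :=
  if h : i < d then svals M ⟨i, h⟩ else 0

/-- The singular value function `φ^s(A) = σ₁(A)⋯σ_{⌊s⌋}(A)·σ_{⌈s⌉}(A)^{s-⌊s⌋}`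
for `0 ≤ s ≤ d`, and `φ^s(A) = |det A|^{s/d}` for `s ≥ d`. -/
noncomputable def phi {d : ℕ} (s : ℝ) (A : Matrix (Fin d) (Fin d) ℝ) : ℝ :=
  if s ≤ d then
    (∏ i ∈ Finset.range ⌊s⌋₊, svalN A i) * (svalN A (⌈s⌉₊ - 1)) ^ (s - ⌊s⌋₊)
  else |A.det| ^ (s / d)

theorem Matrix.isHermitian_transpose_mul_self {d : ℕ} (M : Matrix (Fin d) (Fin d) ℝ) :
    (Mᵀ * M).IsHermitian := by
  simpa [Matrix.conjTranspose_eq_transpose_of_trivial] using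
    Matrix.isHermitian_conjTranspose_mul_self M

namespace PhiAux

variable {d : ℕ}

/-- the multiset of values of a tuple -/
noncomputable def mset (v : Fin d → ℝ) : Multiset ℝ := Finset.univ.val.map v

lemma mset_comp_perm (v : Fin d → ℝ) (σ : Equiv.Perm (Fin d)) : mset (v ∘ σ) = mset v := by
  unfold mset
  have h : (Finset.univ.map σ.toEmbedding) = Finset.univ := Finset.univ_map_equiv_to_embedding σ
  conv_rhs => rw [← h]
  rw [Finset.map_val, Multiset.map_map]
  rfl

lemma mset_map (v : Fin d → ℝ) (g : ℝ → ℝ) : mset (fun i => g (v i)) = (mset v).map g := by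
  unfold mset; rw [Multiset.map_map]; rfl

lemma monotone_unique {v w : Fin d → ℝ} (hv : Monotone v) (hw : Monotone w)
    (h : mset v = mset w) : v = w := by
  have key : ∀ u : Fin d → ℝ, mset u = ((List.ofFn u : List ℝ) : Multiset ℝ) := by
    intro u
    unfold mset
    rw [List.ofFn_eq_map]
    rw [Fin.univ_def]
    rfl
  rw [key, key] at h
  exact List.ofFn_injective (List.Perm.eq_of_sortedLE hv.sortedLE_ofFn hw.sortedLE_ofFn
    (Multiset.coe_eq_coe.mp h))

lemma charpoly_conj {P M Q : Matrix (Fin d) (Fin d) ℝ} (hPQ : P * Q = 1) (hQP : Q * P = 1) :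
    (P * M * Q).charpoly = M.charpoly := by
  have h1 : (C : ℝ →+* ℝ[X]).mapMatrix P * (C : ℝ →+* ℝ[X]).mapMatrix Q = 1 := by
    rw [← _root_.map_mul (C : ℝ →+* ℝ[X]).mapMatrix P Q, hPQ, _root_.map_one]
  have h2 : (C : ℝ →+* ℝ[X]).mapMatrix Q * (C : ℝ →+* ℝ[X]).mapMatrix P = 1 := by
    rw [← _root_.map_mul (C : ℝ →+* ℝ[X]).mapMatrix Q P, hQP, _root_.map_one]
  have h : charmatrix (P * M * Q) =
      (C : ℝ →+* ℝ[X]).mapMatrix P * charmatrix M * (C : ℝ →+* ℝ[X]).mapMatrix Q := by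
    unfold charmatrix
    rw [mul_sub, sub_mul, ← _root_.map_mul (C : ℝ →+* ℝ[X]).mapMatrix P M,
      ← _root_.map_mul (C : ℝ →+* ℝ[X]).mapMatrix (P*M) Q, mul_assoc ((C : ℝ →+* ℝ[X]).mapMatrix P)]
    congr 1
    rw [(Matrix.scalar_commute (X : ℝ[X]) (fun r => (Commute.all _ r)) _).eq, ← mul_assoc, h1,
      one_mul]
  rw [Matrix.charpoly, Matrix.charpoly, h, Matrix.det_mul, Matrix.det_mul, mul_comm, ← mul_assoc,
    ← Matrix.det_mul, h2, Matrix.det_one, one_mul]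

lemma charpoly_diag (μ : Fin d → ℝ) : (Matrix.diagonal μ).charpoly = ∏ i, (X - C (μ i)) := by
  rw [Matrix.charpoly_of_upperTriangular _ (Matrix.blockTriangular_diagonal μ)]
  exact Finset.prod_congr rfl fun i _ => by rw [Matrix.diagonal_apply_eq]

lemma roots_prod (μ : Fin d → ℝ) : (∏ i, (X - C (μ i))).roots = mset μ := by
  have h : (∏ i, (X - C (μ i))) = ((mset μ).map fun a => X - C a).prod := by
    unfold mset; rw [Multiset.map_map, Finset.prod_eq_multiset_prod]; rfl
  rw [h, roots_multiset_prod_X_sub_C]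

lemma eigs_mset {H : Matrix (Fin d) (Fin d) ℝ} (hH : H.IsHermitian)
    {U : Matrix (Fin d) (Fin d) ℝ} (hU : U ∈ Matrix.unitaryGroup (Fin d) ℝ)
    {μ : Fin d → ℝ} (h : H = U * Matrix.diagonal μ * star U) :
    mset hH.eigenvalues = mset μ := by
  have hU1 : U * star U = 1 := Matrix.mem_unitaryGroup_iff.mp hU
  have hU2 : star U * U = 1 := Matrix.mem_unitaryGroup_iff'.mp hU
  have e1 : H.charpoly = (Matrix.diagonal μ).charpoly := by
    rw [h]; exact charpoly_conj hU1 hU2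
  have e2 : H.charpoly = (Matrix.diagonal hH.eigenvalues).charpoly := by
    conv_lhs => rw [hH.spectral_theorem]
    have : (RCLike.ofReal ∘ hH.eigenvalues : Fin d → ℝ) = hH.eigenvalues := by
      funext i; simp
    rw [this]
    exact charpoly_conj
      (Matrix.mem_unitaryGroup_iff.mp (hH.eigenvectorUnitary).2)
      (Matrix.mem_unitaryGroup_iff'.mp (hH.eigenvectorUnitary).2)
  have := e2.symm.trans e1
  rw [charpoly_diag, charpoly_diag] at this
  rw [← roots_prod hH.eigenvalues, ← roots_prod μ, this]


/-- the vector of square roots of eigenvalues of `Mᴴ * M` -/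
noncomputable def sfun (M : Matrix (Fin d) (Fin d) ℝ) : Fin d → ℝ :=
  fun j => Real.sqrt ((Matrix.isHermitian_transpose_mul_self M).eigenvalues j)

/-- `sfun`, sorted increasingly -/
noncomputable def ssorted (M : Matrix (Fin d) (Fin d) ℝ) : Fin d → ℝ :=
  sfun M ∘ Tuple.sort (sfun M)

lemma svals_eq (M : Matrix (Fin d) (Fin d) ℝ) (i : Fin d) : svals M i = ssorted M i.rev := rfl

lemma monotone_ssorted (M : Matrix (Fin d) (Fin d) ℝ) : Monotone (ssorted M) :=
  Tuple.monotone_sort (sfun M)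

lemma mset_ssorted (M : Matrix (Fin d) (Fin d) ℝ) : mset (ssorted M) = mset (sfun M) :=
  mset_comp_perm _ _

variable {A : Matrix (Fin d) (Fin d) ℝ}

lemma prod_eigs (A : Matrix (Fin d) (Fin d) ℝ) :
    ∏ i, (Matrix.isHermitian_transpose_mul_self A).eigenvalues i = A.det * A.det := by
  have h := (Matrix.isHermitian_transpose_mul_self A).det_eq_prod_eigenvalues
  simp only [RCLike.ofReal_real_eq_id, id_eq] at h
  rw [← h, Matrix.det_mul, Matrix.det_transpose]

lemma eigs_pos (hA : IsUnit A) (i : Fin d) :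
    0 < (Matrix.isHermitian_transpose_mul_self A).eigenvalues i := by
  rcases lt_or_eq_of_le (Matrix.eigenvalues_conjTranspose_mul_self_nonneg A i) with h | h
  · exact h
  · exfalso
    have hd : A.det ≠ 0 := by
      intro h0
      have := (Matrix.isUnit_iff_isUnit_det A).mp hA
      rw [h0] at this
      exact this.ne_zero rfl
    have := prod_eigs A
    rw [Finset.prod_eq_zero (Finset.mem_univ i)
      (show (Matrix.isHermitian_transpose_mul_self A).eigenvalues i = 0 from h.symm)] at this
    exact hd (mul_self_eq_zero.mp this.symm)

lemma ssorted_pos (hA : IsUnit A) (i : Fin d) : 0 < ssorted A i :=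
  Real.sqrt_pos.mpr (eigs_pos hA _)

lemma svals_pos (hA : IsUnit A) (i : Fin d) : 0 < svals A i := ssorted_pos hA _

lemma sqrt_prod {ι : Type*} (s : Finset ι) (v : ι → ℝ) (h : ∀ i, 0 ≤ v i) :
    Real.sqrt (∏ i ∈ s, v i) = ∏ i ∈ s, Real.sqrt (v i) := by
  induction s using Finset.cons_induction with
  | empty => simp
  | cons a s ha ih => rw [Finset.prod_cons, Finset.prod_cons, Real.sqrt_mul (h a), ih]

lemma prod_svals (A : Matrix (Fin d) (Fin d) ℝ) : ∏ i, svals A i = |A.det| := by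
  have h1 : ∏ i, svals A i = ∏ i, ssorted A i := by
    simp only [svals_eq]
    exact Equiv.prod_comp Fin.revPerm (ssorted A)
  have h2 : ∏ i, ssorted A i = ∏ i, sfun A i :=
    Equiv.prod_comp (Tuple.sort (sfun A)) (sfun A)
  rw [h1, h2]
  unfold sfun
  rw [← sqrt_prod _ _ (fun i => show 0 ≤ (Matrix.isHermitian_transpose_mul_self A).eigenvalues i
      from Matrix.eigenvalues_conjTranspose_mul_self_nonneg A i),
    prod_eigs A, Real.sqrt_mul_self_eq_abs]

lemma svals_smul_inv (hA : IsUnit A) {c : ℝ} (hc : 0 ≤ c) (i : Fin d) :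
    svals (c • (A⁻¹)ᵀ) i = c * (svals A i.rev)⁻¹ := by
  set μ := (Matrix.isHermitian_transpose_mul_self A).eigenvalues with hμdef
  set U : Matrix (Fin d) (Fin d) ℝ :=
    ↑((Matrix.isHermitian_transpose_mul_self A).eigenvectorUnitary) with hUdef
  set B := c • (A⁻¹)ᵀ with hBdef
  have hUmem := ((Matrix.isHermitian_transpose_mul_self A).eigenvectorUnitary).2
  have hU1 : U * star U = 1 := Matrix.mem_unitaryGroup_iff.mp hUmem
  have hU2 : star U * U = 1 := Matrix.mem_unitaryGroup_iff'.mp hUmem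
  have hofReal : (RCLike.ofReal ∘ μ : Fin d → ℝ) = μ := by funext j; simp
  have hspec : Aᴴ * A = U * Matrix.diagonal μ * star U := by
    rw [Matrix.conjTranspose_eq_transpose_of_trivial]
    conv_lhs => rw [(Matrix.isHermitian_transpose_mul_self A).spectral_theorem]
    rw [hofReal, Unitary.conjStarAlgAut_apply]
  have hμ0 : ∀ j, μ j ≠ 0 := fun j => (eigs_pos hA j).ne'
  have hdd : Matrix.diagonal (fun j => (μ j)⁻¹ * μ j) = (1 : Matrix (Fin d) (Fin d) ℝ) := by
    rw [show (fun j => (μ j)⁻¹ * μ j) = fun _ => (1:ℝ) from funext fun j => inv_mul_cancel₀ (hμ0 j),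
      Matrix.diagonal_one]
  have hinv : (Aᴴ * A)⁻¹ = U * Matrix.diagonal (fun j => (μ j)⁻¹) * star U := by
    apply Matrix.inv_eq_left_inv
    rw [hspec]
    calc
      U * Matrix.diagonal (fun j => (μ j)⁻¹) * star U * (U * Matrix.diagonal μ * star U)
          = U * (Matrix.diagonal (fun j => (μ j)⁻¹) *
              (star U * (U * (Matrix.diagonal μ * star U)))) := by
            simp only [mul_assoc]
      _ = U * (Matrix.diagonal (fun j => (μ j)⁻¹) * (Matrix.diagonal μ * star U)) := by
            rw [← mul_assoc (star U), hU2, one_mul]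
      _ = U * (Matrix.diagonal (fun j => (μ j)⁻¹ * μ j) * star U) := by
            rw [← mul_assoc (Matrix.diagonal _), Matrix.diagonal_mul_diagonal]
      _ = 1 := by rw [hdd, one_mul, hU1]
  have hBB : Bᴴ * B = U * Matrix.diagonal (fun j => (c * c) * (μ j)⁻¹) * star U := by
    have h1 : Bᴴ = c • A⁻¹ := by
      rw [hBdef, Matrix.conjTranspose_smul, star_trivial,
        Matrix.conjTranspose_eq_transpose_of_trivial, Matrix.transpose_transpose]
    have h2 : B = c • (Aᵀ)⁻¹ := by rw [hBdef, Matrix.transpose_nonsing_inv]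
    have h3 : Aᵀ = Aᴴ := (Matrix.conjTranspose_eq_transpose_of_trivial A).symm
    rw [h1]
    conv_lhs => rw [h2]
    rw [smul_mul_assoc, mul_smul_comm, smul_smul, ← Matrix.mul_inv_rev, h3, hinv,
      show (fun j => c * c * (μ j)⁻¹) = (c * c) • (fun j => (μ j)⁻¹) from rfl,
      Matrix.diagonal_smul, mul_smul_comm, smul_mul_assoc]
  have hmB := eigs_mset (Matrix.isHermitian_transpose_mul_self B) hUmem
    (by rw [← Matrix.conjTranspose_eq_transpose_of_trivial]; exact hBB)
  have h3 : mset (sfun B) = mset (fun j => c * (sfun A j)⁻¹) :=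
    calc mset (sfun B)
        = (mset ((Matrix.isHermitian_transpose_mul_self B).eigenvalues)).map Real.sqrt :=
          mset_map _ _
      _ = (mset (fun j => (c * c) * (μ j)⁻¹)).map Real.sqrt := by rw [hmB]
      _ = mset (fun j => Real.sqrt ((c * c) * (μ j)⁻¹)) := (mset_map _ _).symm
      _ = mset (fun j => c * (sfun A j)⁻¹) := by
            congr 1
            funext j
            rw [Real.sqrt_mul (mul_self_nonneg c), Real.sqrt_mul_self hc, Real.sqrt_inv]
            rfl
  set w : Fin d → ℝ := fun j => c * (ssorted A j.rev)⁻¹ with hwdef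
  have hwm : Monotone w := by
    intro a b hab
    have h1 : ssorted A b.rev ≤ ssorted A a.rev := monotone_ssorted A (Fin.rev_le_rev.mpr hab)
    exact mul_le_mul_of_nonneg_left (inv_anti₀ (ssorted_pos hA _) h1) hc
  have hwmset : mset (ssorted B) = mset w := by
    have e1 : w = (fun j => c * (ssorted A j)⁻¹) ∘ Fin.revPerm := rfl
    rw [mset_ssorted, e1, mset_comp_perm, h3]
    calc mset (fun j => c * (sfun A j)⁻¹)
        = (mset (sfun A)).map (fun x => c * x⁻¹) := mset_map (sfun A) (fun x => c * x⁻¹)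
      _ = (mset (ssorted A)).map (fun x => c * x⁻¹) := by rw [mset_ssorted]
      _ = mset (fun j => c * (ssorted A j)⁻¹) := (mset_map (ssorted A) (fun x => c * x⁻¹)).symm
  have hsorted : ssorted B = w := monotone_unique (monotone_ssorted B) hwm hwmset
  rw [svals_eq, hsorted]
  rfl

end PhiAux

/-- For `d ≥ 2`, `s ∈ [d-2, d-1)` and `A ∈ GL_d(ℝ)`,
`φ^{d-s}(|det A|^{1/(d-s)} (A⁻¹)ᵀ) = φ^s(A)`. -/
theorem phi_dual {d : ℕ} (hd : 2 ≤ d) (s : ℝ)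
    (hs1 : (d : ℝ) - 2 ≤ s) (hs2 : s < (d : ℝ) - 1)
    (A : Matrix (Fin d) (Fin d) ℝ) (hA : IsUnit A) :
    phi ((d : ℝ) - s) ((|A.det| ^ (1 / ((d : ℝ) - s))) • (A⁻¹)ᵀ) = phi s A := by
  have hd' : (2:ℝ) ≤ (d:ℝ) := by exact_mod_cast hd
  set t : ℝ := (d:ℝ) - s with htdef
  have hs0 : 0 ≤ s := by linarith
  have ht1 : 1 < t := by rw [htdef]; linarith
  have ht2 : t ≤ 2 := by rw [htdef]; linarith
  have ht0 : t ≠ 0 := by linarith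
  have hsd : s ≤ (d:ℝ) := by linarith
  have htd : t ≤ (d:ℝ) := by linarith
  have hdet : A.det ≠ 0 := ((Matrix.isUnit_iff_isUnit_det A).mp hA).ne_zero
  have habs : 0 < |A.det| := abs_pos.mpr hdet
  set c : ℝ := |A.det| ^ (1 / t) with hcdef
  have hc : 0 < c := Real.rpow_pos_of_pos habs _
  set B := c • (A⁻¹)ᵀ with hBdef
  have hApos : ∀ (i : ℕ), i < d → 0 < svalN A i := fun i h => by
    rw [svalN, dif_pos h]; exact PhiAux.svals_pos hA _
  have h0d : 0 < d := by omega
  have h1d : 1 < d := by omega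
  have hd1 : d - 1 < d := by omega
  have hd2 : d - 2 < d := by omega
  set a := svalN A (d-2) with hadef
  set b := svalN A (d-1) with hbdef
  set p := ∏ i ∈ Finset.range (d-2), svalN A i with hpdef
  have ha : 0 < a := hApos _ hd2
  have hb : 0 < b := hApos _ hd1
  have hB0 : svalN B 0 = c * b⁻¹ := by
    rw [hbdef, svalN, dif_pos h0d, svalN, dif_pos hd1, hBdef,
      PhiAux.svals_smul_inv hA hc.le]
    congr 2
  have hB1 : svalN B 1 = c * a⁻¹ := by
    rw [hadef, svalN, dif_pos h1d, svalN, dif_pos hd2, hBdef,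
      PhiAux.svals_smul_inv hA hc.le]
    congr 2
  have hprodd : ∏ i ∈ Finset.range d, svalN A i = |A.det| := by
    rw [← Fin.prod_univ_eq_prod_range (fun i => svalN A i) d]
    have he : ∀ i : Fin d, svalN A ↑i = svals A i := fun i => by
      rw [svalN, dif_pos i.isLt]
    simp only [he]
    exact PhiAux.prod_svals A
  have hsplit : p * a * b = ∏ i ∈ Finset.range d, svalN A i := by
    have e2 : d - 2 + 1 = d - 1 := by omega
    have e3 : d - 1 + 1 = d := by omega
    rw [hpdef, hadef, hbdef, ← Finset.prod_range_succ (svalN A) (d - 2), e2,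
      ← Finset.prod_range_succ (svalN A) (d - 1), e3]
  have hct : c ^ t = |A.det| := by
    rw [hcdef, ← Real.rpow_mul (abs_nonneg _), one_div, inv_mul_cancel₀ ht0, Real.rpow_one]
  have hpab : c ^ t = p * a * b := by rw [hct, ← hprodd]; exact hsplit.symm
  have hceilt : ⌈t⌉₊ = 2 := by
    rw [Nat.ceil_eq_iff (by norm_num)]
    constructor
    · push_cast; linarith
    · push_cast; linarith
  have hphiB : phi t B = svalN B 0 * svalN B 1 ^ (t - 1) := by
    rcases eq_or_lt_of_le ht2 with h2 | h2
    · have hfl : ⌊t⌋₊ = 2 := by rw [h2]; simp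
      rw [phi, if_pos htd, hceilt, hfl, h2]
      rw [Finset.prod_range_succ, Finset.prod_range_one]
      norm_num
    · have hfl : ⌊t⌋₊ = 1 := by
        rw [Nat.floor_eq_iff (by linarith)]
        constructor <;> push_cast <;> linarith
      rw [phi, if_pos htd, hceilt, hfl, Finset.prod_range_one]
      norm_num
  have hcast : ((d - 2 : ℕ) : ℝ) = (d:ℝ) - 2 := by
    rw [Nat.cast_sub hd]; norm_num
  have hfls : ⌊s⌋₊ = d - 2 := by
    rw [Nat.floor_eq_iff hs0]
    constructor
    · rw [hcast]; linarith
    · rw [hcast]; linarith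
  have hphiA : phi s A = p * a ^ (s - ((d:ℝ) - 2)) := by
    rcases eq_or_lt_of_le hs1 with h2 | h2
    · rw [phi, if_pos hsd, hfls, hcast, ← h2, sub_self, Real.rpow_zero, Real.rpow_zero,
        mul_one]
    · have hcs : ⌈s⌉₊ = d - 1 := by
        rw [Nat.ceil_eq_iff (by omega)]
        constructor
        · rw [show d - 1 - 1 = d - 2 from by omega, hcast]; exact h2
        · rw [Nat.cast_sub (by omega : 1 ≤ d)]; push_cast; linarith
      rw [phi, if_pos hsd, hfls, hcs, hcast, show d - 1 - 1 = d - 2 from by omega]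
  rw [hphiB, hphiA, hB0, hB1]
  have hexp : s - ((d:ℝ) - 2) = 2 - t := by rw [htdef]; ring
  rw [hexp, Real.mul_rpow hc.le (inv_nonneg.mpr ha.le), Real.inv_rpow ha.le]
  have hcc : c * c ^ (t - 1) = c ^ t := by
    nth_rewrite 1 [← Real.rpow_one c]
    rw [← Real.rpow_add hc]
    congr 1; ring
  have hab : a * (a ^ (t - 1))⁻¹ = a ^ (2 - t) := by
    nth_rewrite 1 [← Real.rpow_one a]
    rw [← Real.rpow_neg ha.le, ← Real.rpow_add ha]
    congr 1; ring
  calc c * b⁻¹ * (c ^ (t-1) * (a ^ (t-1))⁻¹)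
      = (c * c ^ (t-1)) * b⁻¹ * (a ^ (t-1))⁻¹ := by ring
    _ = (p * a * b) * b⁻¹ * (a ^ (t-1))⁻¹ := by rw [hcc, hpab]
    _ = p * (a * (a ^ (t-1))⁻¹) * (b * b⁻¹) := by ring
    _ = p * a ^ (2 - t) * 1 := by rw [hab, mul_inv_cancel₀ hb.ne']
    _ = p * a ^ (2 - t) := mul_one _
end

section
/- Let P be the 2×2 matrix with top-left entry 1 and all other entries 0, and let I be the 2×2 identity. Define V₁ := range(I ⊗ P) ⊂ ℝ⁴ and U₂ := ker(P ⊗ I) ⊂ ℝ⁴. Then for all X₁, X₂ ∈ GL₂(ℝ), the intersection (X₁ ⊗ X₂)V₁ ∩ U₂ is exactly one-dimensional. -/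
open Matrix Kronecker Module

/-!
Identify `ℝ⁴` with `ℝ² ⊗ ℝ²`. Then `V₁` is the space of tensors `a ⊗ e₀`, and since `X₁` is
invertible, `X₁ ⊗ X₂` maps it onto the tensors `a ⊗ w` with `w = X₂ e₀ ≠ 0`. As
`(P ⊗ 1)(a ⊗ w) = Pa ⊗ w` and `a ↦ a ⊗ w` is injective, the intersection with `U₂ = ker (P ⊗ 1)`
is the image of the line `ker P`.
-/

namespace Matrix

variable {K m n m' n' : Type*}

section CommSemiring

variable [CommSemiring K]

/-- The Kronecker product `a ⊗ w` of vectors, as a linear map in `a`. -/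
def kronRight (w : n → K) : (m → K) →ₗ[K] (m × n → K) where
  toFun a p := a p.1 * w p.2
  map_add' a b := by ext; simp [add_mul]
  map_smul' c a := by ext; simp [mul_assoc]

@[simp]
theorem kronRight_apply (w : n → K) (a : m → K) (p : m × n) : kronRight w a p = a p.1 * w p.2 :=
  rfl

theorem kronRight_injective [IsDomain K] {w : n → K} (hw : w ≠ 0) :
    Function.Injective (kronRight (m := m) w) := by
  obtain ⟨j, hj⟩ := Function.ne_iff.mp hw
  intro a b hab
  ext i
  exact mul_right_cancel₀ hj (congrFun hab (i, j))

variable [Fintype m] [Fintype n]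

theorem kronecker_mulVec_kronRight (A : Matrix m' m K) (B : Matrix n' n K) (w : n → K)
    (a : m → K) : (A ⊗ₖ B) *ᵥ kronRight w a = kronRight (B *ᵥ w) (A *ᵥ a) := by
  ext ⟨i, j⟩
  simp only [mulVec, dotProduct, kronRight_apply, kroneckerMap_apply, Fintype.sum_prod_type,
    Finset.sum_mul_sum]
  exact Finset.sum_congr rfl fun _ _ => Finset.sum_congr rfl fun _ _ => by ring

theorem mulVecLin_kronecker_comp_kronRight (A : Matrix m' m K) (B : Matrix n' n K) (w : n → K) :
    (A ⊗ₖ B).mulVecLin ∘ₗ kronRight w = kronRight (B *ᵥ w) ∘ₗ A.mulVecLin :=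
  LinearMap.ext (kronecker_mulVec_kronRight A B w)

theorem range_mulVecLin_one_kronecker_single [DecidableEq m] [DecidableEq n] (j : n) :
    LinearMap.range ((1 : Matrix m m K) ⊗ₖ single j j 1).mulVecLin =
      LinearMap.range (kronRight (m := m) (Pi.single j 1)) := by
  apply le_antisymm
  · rintro _ ⟨v, rfl⟩
    refine ⟨fun i => v (i, j), ?_⟩
    ext ⟨i, k⟩
    simp [mulVec, dotProduct, Fintype.sum_prod_type, one_apply, single_apply, Pi.single_apply,
      ite_and, eq_comm]
  · rintro _ ⟨a, rfl⟩
    refine ⟨kronRight (Pi.single j 1) a, ?_⟩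
    rw [mulVecLin_apply, kronecker_mulVec_kronRight, single_mulVec_eq, one_mulVec]
    simp

theorem finrank_range_kronRight_inf_ker_mulVecLin_kronecker [IsDomain K] (A : Matrix m' m K)
    (B : Matrix n' n K) {w : n → K} (hw : B *ᵥ w ≠ 0) :
    finrank K ↥(LinearMap.range (kronRight w) ⊓ LinearMap.ker (A ⊗ₖ B).mulVecLin) =
      finrank K (LinearMap.ker A.mulVecLin) := by
  have hw₀ : w ≠ 0 := by rintro rfl; exact hw (mulVec_zero B)
  rw [← Submodule.map_comap_eq, ← LinearMap.ker_comp, mulVecLin_kronecker_comp_kronRight,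
    LinearMap.ker_comp_of_ker_eq_bot A.mulVecLin
      (LinearMap.ker_eq_bot_of_injective (kronRight_injective hw))]
  exact ((LinearMap.ker A.mulVecLin).equivMapOfInjective _
    (kronRight_injective hw₀)).finrank_eq.symm

end CommSemiring

variable [Fintype m] [DecidableEq m]

theorem map_mulVecLin_kronecker_range_kronRight [CommRing K] [Fintype n] {A : Matrix m m K}
    (hA : IsUnit A) (B : Matrix n' n K) (w : n → K) :
    (LinearMap.range (kronRight w)).map (A ⊗ₖ B).mulVecLin =
      LinearMap.range (kronRight (B *ᵥ w)) := by
  rw [← LinearMap.range_comp, mulVecLin_kronecker_comp_kronRight,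
    LinearMap.range_comp_of_range_eq_top]
  exact LinearMap.range_eq_top.mpr (mulVec_surjective_iff_isUnit.mpr hA)

section Field

variable [Field K]

theorem ker_mulVecLin_single (i : m) :
    LinearMap.ker (single i i (1 : K)).mulVecLin = LinearMap.ker (LinearMap.proj i) := by
  ext a
  simp [single_mulVec_eq]

theorem finrank_ker_mulVecLin_single (i : m) :
    finrank K (LinearMap.ker (single i i (1 : K)).mulVecLin) = Fintype.card m - 1 := by
  have h := (LinearMap.proj (R := K) (φ := fun _ : m => K) i).finrank_range_add_finrank_ker
  rw [LinearMap.range_eq_top.mpr (fun c => ⟨Pi.single i c, by simp⟩), finrank_top,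
    finrank_self, finrank_fintype_fun_eq_card] at h
  rw [ker_mulVecLin_single]
  omega

end Field

end Matrix

/-- Let `P = [[1,0],[0,0]]`, `I` the 2×2 identity, `V₁ := range(I ⊗ P) ⊂ ℝ⁴`,
`U₂ := ker(P ⊗ I) ⊂ ℝ⁴`. Then for all `X₁, X₂ ∈ GL₂(ℝ)` the subspace
`(X₁ ⊗ X₂)V₁ ∩ U₂` is exactly one-dimensional. -/
theorem kron_intersection_dim_one
    (P : Matrix (Fin 2) (Fin 2) ℝ) (hP : P = !![(1 : ℝ), 0; 0, 0])
    (V₁ : Submodule ℝ (Fin 2 × Fin 2 → ℝ))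
    (hV₁ : V₁ = LinearMap.range (Matrix.mulVecLin ((1 : Matrix (Fin 2) (Fin 2) ℝ) ⊗ₖ P)))
    (U₂ : Submodule ℝ (Fin 2 × Fin 2 → ℝ))
    (hU₂ : U₂ = LinearMap.ker (Matrix.mulVecLin (P ⊗ₖ (1 : Matrix (Fin 2) (Fin 2) ℝ))))
    (X₁ X₂ : Matrix (Fin 2) (Fin 2) ℝ) (hX₁ : IsUnit X₁) (hX₂ : IsUnit X₂) :
    Module.finrank ℝ ↥(Submodule.map (Matrix.mulVecLin (X₁ ⊗ₖ X₂)) V₁ ⊓ U₂) = 1 := by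
  have hP_single : P = single 0 0 1 := by
    subst hP
    ext i j
    fin_cases i <;> fin_cases j <;> rfl
  have hcol : X₂ *ᵥ Pi.single 0 1 ≠ 0 := by
    rw [← mulVec_zero X₂]
    exact (mulVec_injective_iff_isUnit.mpr hX₂).ne (Pi.single_ne_zero_iff.mpr one_ne_zero)
  subst hV₁ hU₂
  rw [hP_single, range_mulVecLin_one_kronecker_single, map_mulVecLin_kronecker_range_kronRight hX₁,
    finrank_range_kronRight_inf_ker_mulVecLin_kronecker _ _ (by rwa [one_mulVec]),
    finrank_ker_mulVecLin_single, Fintype.card_fin]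
end
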